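/- arXiv:2603.23548 — 5 statements merged into one kernel-verified Lean document; each statement's English description precedes it below -/
import Mathlib

section
/- Let κ be a regular uncountable cardinal and λ a cardinal. For every ordinal δ with 0 < δ < κ and every sequence (B_i)_{i<δ} of elements of R(κ,λ) that is increasing with respect to inclusion (i < j < δ implies B_i ⊆ B_j), the union ⋃_{i<δ} B_i again belongs to R(κ,λ). (Hence R(κ,λ), ordered by B₁ ≤ B₂ iff B₂ ⊆ B₁, is a κ-closed partial order.) -/
/-!
The union `B` of the chain has at most `|δ| · κ = κ` elements, and two conflicting triples
`(α,0,β)`, `(α,1,β)` of `B` would already lie in a common `B i`. For the club clause, the set of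
positions left free by `B` at `α` is the intersection of the `δ < κ` sets left free by the `B i`;
since `cf κ = κ > ℵ₀`, such an intersection of clubs is again a club (`IsClub.iInter`, read on
the well-order `Iio κ.ord`).
-/

open Cardinal Set

/-- `C` is closed and unbounded (club) in the ordinal `o`: `C ⊆ o`, `C` is unbounded
in `o`, and for every nonempty `X ⊆ C` with `sup X < o` one has `sup X ∈ C`. -/
def IsClubIn (C : Set Ordinal.{0}) (o : Ordinal.{0}) : Prop :=
  C ⊆ Set.Iio o ∧
  (∀ η < o, ∃ γ ∈ C, η < γ) ∧
  ∀ X ⊆ C, X.Nonempty → sSup X < o → sSup X ∈ C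

/-- Baumgartner's partial order `R(κ,λ)`: subsets `B` of `λ × 2 × κ`
(here `2` is rendered as `Bool`, with `false` for `0` and `true` for `1`) such that
`|B| ≤ κ`, never both `(α,0,β) ∈ B` and `(α,1,β) ∈ B`, and for each `α < λ` the set
`{β < κ : (α,0,β) ∉ B ∧ (α,1,β) ∉ B}` is club in `κ`. -/
def RSet (κ lam : Cardinal.{0}) : Set (Set (Ordinal.{0} × Bool × Ordinal.{0})) :=
  {B | B ⊆ {p | p.1 < lam.ord ∧ p.2.2 < κ.ord} ∧
       Cardinal.mk ↥B ≤ Cardinal.lift.{1} κ ∧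
       (∀ α β, ¬((α, false, β) ∈ B ∧ (α, true, β) ∈ B)) ∧
       ∀ α < lam.ord,
         IsClubIn {β | β < κ.ord ∧ (α, false, β) ∉ B ∧ (α, true, β) ∉ B} κ.ord}

theorem Ordinal.sSup_image_val_eq_of_isLUB {o : Ordinal} {d : Set (Iio o)} {a : Iio o}
    (ha : IsLUB d a) : sSup (Subtype.val '' d) = a := by
  have hle : sSup (Subtype.val '' d) ≤ a := csSup_le' (forall_mem_image.2 fun _ hx => ha.1 hx)
  refine hle.antisymm (ha.2 (show (⟨_, hle.trans_lt a.2⟩ : Iio o) ∈ upperBounds d from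
    fun x hx => ?_))
  exact show (x : Ordinal) ≤ _ from
    le_csSup ⟨a, forall_mem_image.2 fun _ hy => ha.1 hy⟩ (mem_image_of_mem _ hx)

namespace IsClubIn

variable {C : Set Ordinal.{0}} {o : Ordinal.{0}}

theorem isClub (hC : IsClubIn C o) : IsClub {x : Iio o | (x : Ordinal) ∈ C} := by
  obtain ⟨hsub, hunbdd, hclosed⟩ := hC
  refine ⟨dirSupClosed_iff_of_linearOrder.2 fun d hd hne a ha => ?_, fun a => ?_⟩
  · have hsup := Ordinal.sSup_image_val_eq_of_isLUB ha
    have := hclosed _ (image_subset_iff.2 hd) (hne.image _) (hsup ▸ a.2)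
    rwa [hsup] at this
  · obtain ⟨γ, hγC, hγ⟩ := hunbdd a a.2
    exact ⟨⟨γ, hsub hγC⟩, hγC, hγ.le⟩

theorem sInter {𝒮 : Set (Set Ordinal.{0})} (hne : 𝒮.Nonempty) (ho : o.cof ≠ ℵ₀)
    (h𝒮 : #𝒮 < Cardinal.lift.{1} o.cof) (hclub : ∀ C ∈ 𝒮, IsClubIn C o) :
    IsClubIn (⋂₀ 𝒮) o := by
  obtain ⟨C₀, hC₀⟩ := hne
  have hcof : Order.cof (Iio o) = Cardinal.lift.{1} o.cof := by
    rw [Ordinal.cof_Iio, Ordinal.lift_cof]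
  have hclub' : IsClub (⋂ C : 𝒮, {x : Iio o | (x : Ordinal) ∈ C.1}) :=
    IsClub.iInter (by rwa [hcof, Ne, Cardinal.lift_eq_aleph0])
      (by simpa [hcof] using h𝒮) fun C => (hclub C C.2).isClub
  refine ⟨(sInter_subset_of_mem hC₀).trans (hclub C₀ hC₀).1, fun η hη => ?_,
    fun X hX hXne hXlt C hC =>
      (hclub C hC).2.2 X (hX.trans (sInter_subset_of_mem hC)) hXne hXlt⟩
  -- first step strictly above `η` inside one club, since `IsCofinal` only gives `≤`
  obtain ⟨γ₀, hγ₀, hηγ₀⟩ := (hclub C₀ hC₀).2.1 η hη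
  obtain ⟨γ, hγ, hγ₀γ⟩ := hclub'.isCofinal ⟨γ₀, (hclub C₀ hC₀).1 hγ₀⟩
  exact ⟨γ, by simpa using hγ, hηγ₀.trans_le hγ₀γ⟩

end IsClubIn

theorem MonotoneOn.exists_mem_and_mem_of_mem_biUnion {ι α : Type*} [LinearOrder ι] {I : Set ι}
    {B : ι → Set α} (hB : MonotoneOn B I) {x y : α} (hx : x ∈ ⋃ i ∈ I, B i)
    (hy : y ∈ ⋃ i ∈ I, B i) : ∃ i ∈ I, x ∈ B i ∧ y ∈ B i := by
  obtain ⟨i, hi, hxi⟩ := mem_iUnion₂.1 hx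
  obtain ⟨j, hj, hyj⟩ := mem_iUnion₂.1 hy
  rcases le_total i j with hij | hji
  · exact ⟨j, hj, hB hi hj hij hxi, hyj⟩
  · exact ⟨i, hi, hxi, hB hj hi hji hyj⟩

def freeSlots (B : Set (Ordinal.{0} × Bool × Ordinal.{0})) (α o : Ordinal.{0}) :
    Set Ordinal.{0} :=
  {β | β < o ∧ (α, false, β) ∉ B ∧ (α, true, β) ∉ B}

theorem freeSlots_biUnion {ι : Type*} {I : Set ι} (hI : I.Nonempty)
    (B : ι → Set (Ordinal.{0} × Bool × Ordinal.{0})) (α o : Ordinal.{0}) :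
    freeSlots (⋃ i ∈ I, B i) α o = ⋂ i ∈ I, freeSlots (B i) α o := by
  ext β
  obtain ⟨i₀, hi₀⟩ := hI
  simp only [freeSlots, mem_iUnion₂, mem_iInter₂, mem_ofPred_eq, not_exists]
  exact ⟨fun h i hi => ⟨h.1, h.2.1 i hi, h.2.2 i hi⟩,
    fun h => ⟨(h i₀ hi₀).1, fun i hi => (h i hi).2.1, fun i hi => (h i hi).2.2⟩⟩

/-- For regular uncountable `κ`, the union of an increasing chain of fewer than `κ`
elements of `R(κ,λ)` again belongs to `R(κ,λ)`; i.e. `R(κ,λ)` is `κ`-closed. -/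
theorem rSet_kappa_closed (κ lam : Cardinal.{0}) (hreg : κ.IsRegular) (hunc : ℵ₀ < κ)
    (δ : Ordinal.{0}) (hδ0 : 0 < δ) (hδκ : δ < κ.ord)
    (B : Ordinal.{0} → Set (Ordinal.{0} × Bool × Ordinal.{0}))
    (hB : ∀ i < δ, B i ∈ RSet κ lam)
    (hmono : ∀ i j, i < j → j < δ → B i ⊆ B j) :
    (⋃ i ∈ Set.Iio δ, B i) ∈ RSet κ lam := by
  have hδ : δ.card < κ := Cardinal.lt_ord.1 hδκ
  have hmonoOn : MonotoneOn B (Iio δ) := fun i _ j hj hij =>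
    hij.eq_or_lt.elim (fun h => h ▸ le_rfl) fun h => hmono i j h hj
  refine ⟨iUnion₂_subset fun i hi => (hB i hi).1, ?_, ?_, fun α hα => ?_⟩
  · refine Cardinal.mk_biUnion_le_of_le_lift ?_ (aleph0_le_lift.2 hunc.le) B
      fun i hi => (hB i hi).2.1
    rw [Cardinal.lift_lift, Cardinal.lift_umax, Cardinal.lift_le]
    exact hδ.le
  · rintro α β ⟨hfalse, htrue⟩
    obtain ⟨i, hi, hf, ht⟩ := hmonoOn.exists_mem_and_mem_of_mem_biUnion hfalse htrue
    exact (hB i hi).2.2.1 α β ⟨hf, ht⟩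
  · change IsClubIn (freeSlots _ α κ.ord) κ.ord
    rw [freeSlots_biUnion ⟨0, hδ0⟩, ← sInter_image]
    refine IsClubIn.sInter ((show (Iio δ).Nonempty from ⟨0, hδ0⟩).image _)
      (by rw [hreg.cof_ord]; exact hunc.ne') ?_ ?_
    · refine (mk_image_le.trans_eq (Cardinal.mk_Iio_ordinal δ)).trans_lt ?_
      rwa [hreg.cof_ord, Cardinal.lift_lt]
    · rintro _ ⟨i, hi, rfl⟩
      exact (hB i hi).2.2.2 α hα
end

section
/- Let κ be a regular cardinal and λ a cardinal. Every subset A of R(κ,λ) whose elements are pairwise incompatible (i.e., for distinct B₁, B₂ ∈ A there is no C ∈ R(κ,λ) with B₁ ∪ B₂ ⊆ C) has cardinality at most 2^κ. That is, R(κ,λ) satisfies the (2^κ)⁺-chain condition. -/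
open Cardinal Set

/-!
If `A` had more than `2 ^ κ` elements, close a subfamily `M ⊆ A` of size `2 ^ κ` under the
operation that, for a subfamily `N`, picks one member of `A` realising each trace `B ∩ (S × 2 × κ)`,
where `S` is the union of the supports of `N`. Iterating this along `κ⁺` stages makes `M` closed
under `κ`-small subfamilies, because `κ⁺` is regular. For `B ∈ A \ M`, the at most `κ` points that
the support of `B` shares with that of `M` come from a small subfamily `N ⊆ M`; the representative
`B' ∈ M` of the trace of `B` over the support of `N` then agrees with `B` wherever both supports
meet. Over every `α` the union `B ∪ B'` coincides with `B` or with `B'`, so it is a condition,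
contradicting the incompatibility of `B ≠ B'`.
-/

universe u

namespace Cardinal

theorem mk_iUnion_le_of_le {ι α : Type u} {f : ι → Set α} {μ : Cardinal.{u}} (hμ : ℵ₀ ≤ μ)
    (hι : #ι ≤ μ) (hf : ∀ i, #(f i) ≤ μ) : #(⋃ i, f i) ≤ μ :=
  calc #(⋃ i, f i) ≤ #ι * ⨆ i, #(f i) := mk_iUnion_le f
    _ ≤ μ * μ := mul_le_mul' hι (ciSup_le' hf)
    _ = μ := mul_eq_self hμ

end Cardinal

theorem Set.exists_subset_mk_le_subset_biUnion {α β : Type u} {f : β → Set α} {s : Set β}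
    {t : Set α} (ht : t ⊆ ⋃ b ∈ s, f b) : ∃ s' ⊆ s, #s' ≤ #t ∧ t ⊆ ⋃ b ∈ s', f b := by
  have hcov : ∀ a : t, ∃ b ∈ s, (a : α) ∈ f b := by simpa using fun a ha => ht ha
  choose g hgs hg using hcov
  exact ⟨range g, range_subset_iff.2 hgs, mk_range_le,
    fun a ha => mem_biUnion (mem_range_self ⟨a, ha⟩) (hg ⟨a, ha⟩)⟩

theorem exists_mk_le_closed_under_small_subsets {X ι : Type u} [LinearOrder ι]
    [WellFoundedLT ι] {κ μ : Cardinal.{u}} (hμ : ℵ₀ ≤ μ) (hι : #ι ≤ μ) (hκ : κ < Order.cof ι)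
    {s : Set X} (F : Set X → Set X) (hFs : ∀ N, F N ⊆ s)
    (hF : ∀ N ⊆ s, #N ≤ μ → #(F N) ≤ μ) :
    ∃ M ⊆ s, #M ≤ μ ∧ ∀ D ⊆ M, #D ≤ κ → ∃ N ⊆ M, D ⊆ N ∧ F N ⊆ M := by
  let chain : ι → Set X := WellFoundedLT.fix fun i chain => F (⋃ j : Iio i, chain j j.2)
  have hchain_eq : ∀ i, chain i = F (⋃ j : Iio i, chain j) := WellFoundedLT.fix_eq _
  have hchain_s : ∀ i, chain i ⊆ s := fun i => hchain_eq i ▸ hFs _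
  have hchain_mk : ∀ i, #(chain i) ≤ μ := by
    intro i
    induction i using WellFoundedLT.induction with
    | ind i ih =>
      rw [hchain_eq]
      exact hF _ (iUnion_subset fun j => hchain_s j)
        (mk_iUnion_le_of_le hμ ((mk_set_le _).trans hι) fun j => ih j j.2)
  refine ⟨⋃ i, chain i, iUnion_subset hchain_s, mk_iUnion_le_of_le hμ hι hchain_mk, ?_⟩
  intro D hDM hDκ
  have hstage : ∀ x : D, ∃ i, (x : X) ∈ chain i := fun x => mem_iUnion.1 (hDM x.2)
  choose g hg using hstage
  obtain ⟨j, hj⟩ : ∃ j, ∀ i ∈ range g, i < j := by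
    rw [← not_isCofinal_iff]
    exact fun hcof => ((Order.cof_le hcof).trans (mk_range_le.trans hDκ)).not_gt hκ
  refine ⟨⋃ i : Iio j, chain i, iUnion_subset fun i => subset_iUnion chain i,
    fun x hx => mem_iUnion.2 ⟨⟨g ⟨x, hx⟩, hj _ (mem_range_self _)⟩, hg ⟨x, hx⟩⟩, ?_⟩
  rw [← hchain_eq]
  exact subset_iUnion chain j

theorem mem_rSet_of_forall_fiber_eq {κ lam : Cardinal.{0}}
    {C : Set (Ordinal.{0} × Bool × Ordinal.{0})} (hC : C ⊆ {p | p.1 < lam.ord ∧ p.2.2 < κ.ord})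
    (hCκ : #C ≤ lift.{1} κ) (hfiber : ∀ α, ∃ B ∈ RSet κ lam, Prod.mk α ⁻¹' C = Prod.mk α ⁻¹' B) :
    C ∈ RSet κ lam := by
  refine ⟨hC, hCκ, fun α β => ?_, fun α hα => ?_⟩
  · obtain ⟨B, hB, hαB⟩ := hfiber α
    have hmem (q) : (α, q) ∈ C ↔ (α, q) ∈ B := Set.ext_iff.1 hαB q
    simpa only [hmem] using hB.2.2.1 α β
  · obtain ⟨B, hB, hαB⟩ := hfiber α
    have hmem (q) : (α, q) ∈ C ↔ (α, q) ∈ B := Set.ext_iff.1 hαB q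
    simpa only [hmem] using hB.2.2.2 α hα

theorem union_mem_rSet {κ lam : Cardinal.{0}} (hκ : ℵ₀ ≤ κ)
    {B B' : Set (Ordinal.{0} × Bool × Ordinal.{0})} (hB : B ∈ RSet κ lam) (hB' : B' ∈ RSet κ lam)
    {S : Set Ordinal.{0}} (hS : Prod.fst '' B ∩ Prod.fst '' B' ⊆ S)
    (hBB' : B ∩ Prod.fst ⁻¹' S = B' ∩ Prod.fst ⁻¹' S) : B ∪ B' ∈ RSet κ lam := by
  have fiber_eq_empty : ∀ {C : Set (Ordinal.{0} × Bool × Ordinal.{0})} {α},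
      α ∉ Prod.fst '' C → Prod.mk α ⁻¹' C = ∅ := fun hα =>
    eq_empty_of_forall_notMem fun q hq => hα ⟨_, hq, rfl⟩
  refine mem_rSet_of_forall_fiber_eq (union_subset hB.1 hB'.1)
    ((mk_union_le B B').trans ((add_le_add hB.2.1 hB'.2.1).trans_eq
      (add_eq_self (aleph0_le_lift.2 hκ)))) fun α => ?_
  rw [preimage_union]
  by_cases hαS : α ∈ S
  · refine ⟨B, hB, union_eq_left.2 ?_⟩
    intro q hq
    have hq' : (α, q) ∈ B' ∩ Prod.fst ⁻¹' S := ⟨hq, hαS⟩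
    rw [← hBB'] at hq'
    exact hq'.1
  · by_cases hαB : α ∈ Prod.fst '' B
    · exact ⟨B, hB, by rw [fiber_eq_empty fun hαB' => hαS (hS ⟨hαB, hαB'⟩), union_empty]⟩
    · exact ⟨B', hB', by rw [fiber_eq_empty hαB, empty_union]⟩

theorem mk_image_inter_preimage_fst_le {κ lam : Cardinal.{0}} (hκ : ℵ₀ ≤ κ)
    {A : Set (Set (Ordinal.{0} × Bool × Ordinal.{0}))} (hA : A ⊆ RSet κ lam)
    {S : Set Ordinal.{0}} (hS : #S ≤ 2 ^ lift.{1} κ) :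
    #((· ∩ Prod.fst ⁻¹' S) '' A) ≤ 2 ^ lift.{1} κ := by
  have hκ' : ℵ₀ ≤ lift.{1} κ := aleph0_le_lift.2 hκ
  have hμ : ℵ₀ ≤ 2 ^ lift.{1} κ := hκ'.trans (cantor _).le
  let R : Set (Ordinal.{0} × Bool × Ordinal.{0}) := S ×ˢ (Set.univ ×ˢ Iio κ.ord)
  have hR : #R ≤ 2 ^ lift.{1} κ := by
    have h2 : (2 : Cardinal) ≤ 2 ^ lift.{1} κ := by
      exact_mod_cast (natCast_lt_aleph0 (n := 2)).le.trans hμ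
    simp only [R, mk_congr (Equiv.Set.prod _ _), mk_prod, mk_univ, mk_bool,
      mk_Iio_ordinal, card_ord, lift_uzero, lift_id, lift_ofNat]
    calc #S * (2 * lift.{1} κ) ≤ 2 ^ lift.{1} κ * (2 ^ lift.{1} κ * 2 ^ lift.{1} κ) :=
          mul_le_mul' hS (mul_le_mul' h2 (cantor _).le)
      _ = 2 ^ lift.{1} κ := by rw [mul_eq_self hμ, mul_eq_self hμ]
  have himage : (· ∩ Prod.fst ⁻¹' S) '' A ⊆ {t | t ⊆ R ∧ #t ≤ lift.{1} κ} := by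
    rintro _ ⟨B, hB, rfl⟩
    exact ⟨fun p hp => ⟨hp.2, trivial, ((hA hB).1 hp.1).2⟩,
      (mk_le_mk_of_subset inter_subset_left).trans (hA hB).2.1⟩
  calc #((· ∩ Prod.fst ⁻¹' S) '' A)
    _ ≤ #{t | t ⊆ R ∧ #t ≤ lift.{1} κ} := mk_le_mk_of_subset himage
    _ ≤ max #R ℵ₀ ^ lift.{1} κ := mk_bounded_subset_le R _
    _ ≤ (2 ^ lift.{1} κ) ^ lift.{1} κ := power_le_power_right (max_le hR hμ)
    _ = 2 ^ lift.{1} κ := by rw [← power_mul, mul_eq_self hκ']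

theorem exists_trace_representatives {κ lam : Cardinal.{0}} (hκ : ℵ₀ ≤ κ)
    {A : Set (Set (Ordinal.{0} × Bool × Ordinal.{0}))} (hA : A ⊆ RSet κ lam) :
    ∃ F : Set (Set (Ordinal.{0} × Bool × Ordinal.{0})) →
        Set (Set (Ordinal.{0} × Bool × Ordinal.{0})),
      (∀ N, F N ⊆ A) ∧ (∀ N ⊆ A, #N ≤ 2 ^ lift.{1} κ → #(F N) ≤ 2 ^ lift.{1} κ) ∧
      ∀ N, ∀ B ∈ A, ∃ B' ∈ F N, B' ∩ Prod.fst ⁻¹' (⋃ C ∈ N, Prod.fst '' C) =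
        B ∩ Prod.fst ⁻¹' (⋃ C ∈ N, Prod.fst '' C) := by
  choose F hFA hFbij using fun N : Set (Set (Ordinal.{0} × Bool × Ordinal.{0})) =>
    exists_subset_bijOn A (· ∩ Prod.fst ⁻¹' (⋃ C ∈ N, Prod.fst '' C))
  refine ⟨F, hFA, fun N hNA hN => ?_, fun N B hB => (hFbij N).surjOn ⟨B, hB, rfl⟩⟩
  have hsupport : #(⋃ C ∈ N, Prod.fst '' C) ≤ 2 ^ lift.{1} κ := by
    rw [biUnion_eq_iUnion]
    exact mk_iUnion_le_of_le ((aleph0_le_lift.2 hκ).trans (cantor _).le) hN fun C =>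
      mk_image_le.trans ((hA (hNA C.2)).2.1.trans (cantor _).le)
  rw [← mk_image_eq_of_injOn _ _ (hFbij N).injOn, (hFbij N).image_eq]
  exact mk_image_inter_preimage_fst_le hκ hA hsupport

/-- `R(κ,λ)` satisfies the `(2^κ)⁺`-chain condition: every pairwise-incompatible
subset of `R(κ,λ)` (ordered by reverse inclusion, so `B₁, B₂` are compatible iff some
`C ∈ R(κ,λ)` contains `B₁ ∪ B₂`) has cardinality at most `2^κ`. -/
theorem rSet_chain_condition (κ lam : Cardinal.{0}) (hreg : κ.IsRegular)
    (A : Set (Set (Ordinal.{0} × Bool × Ordinal.{0})))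
    (hA : A ⊆ RSet κ lam)
    (hanti : ∀ B₁ ∈ A, ∀ B₂ ∈ A, B₁ ≠ B₂ → ¬∃ C ∈ RSet κ lam, B₁ ∪ B₂ ⊆ C) :
    Cardinal.mk ↥A ≤ Cardinal.lift.{1} (2 ^ κ) := by
  have hκ : ℵ₀ ≤ κ := hreg.aleph0_le
  have hκ' : ℵ₀ ≤ lift.{1} κ := aleph0_le_lift.2 hκ
  rw [lift_power, lift_two]
  by_contra! hA_large
  obtain ⟨F, hFA, hF, hFrep⟩ := exists_trace_representatives hκ hA
  obtain ⟨M, hMA, hMμ, hMclosed⟩ :=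
    exists_mk_le_closed_under_small_subsets (ι := (Order.succ (lift.{1} κ)).ord.ToType)
      (hκ'.trans (cantor _).le) (by rw [mk_toType, card_ord]; exact Order.succ_le_of_lt (cantor _))
      (by rw [Ordinal.cof_toType, (isRegular_succ hκ').cof_ord]; exact Order.lt_succ _) F hFA hF
  obtain ⟨B, hBA, hBM⟩ : ∃ B ∈ A, B ∉ M :=
    not_subset.1 fun hAM => ((mk_le_mk_of_subset hAM).trans hMμ).not_gt hA_large
  obtain ⟨D, hDM, hDB, hD⟩ := exists_subset_mk_le_subset_biUnion
    (inter_subset_right : Prod.fst '' B ∩ (⋃ C ∈ M, Prod.fst '' C) ⊆ _)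
  obtain ⟨N, hNM, hDN, hFN⟩ := hMclosed D hDM
    (hDB.trans ((mk_le_mk_of_subset inter_subset_left).trans (mk_image_le.trans (hA hBA).2.1)))
  obtain ⟨B', hB'N, hB'⟩ := hFrep N B hBA
  refine hanti B hBA B' (hFA N hB'N) (fun h => hBM (h ▸ hFN hB'N))
    ⟨B ∪ B', union_mem_rSet hκ (hA hBA) (hA (hFA N hB'N)) ?_ hB'.symm, subset_rfl⟩
  rintro α ⟨hαB, hαB'⟩
  exact biUnion_mono hDN (fun _ _ => subset_rfl) (hD ⟨hαB, mem_biUnion (hFN hB'N) hαB'⟩)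
end

section
/- Let κ be a regular uncountable cardinal and λ a cardinal. Suppose B ⊆ λ × 2 × κ satisfies: |B| ≤ κ; for all α < λ and β < κ not both (α,0,β) ∈ B and (α,1,β) ∈ B; and for every α < λ the set {β < κ : (α,0,β) ∉ B and (α,1,β) ∉ B} contains a closed unbounded subset of κ. Then there exists B' ∈ R(κ,λ) with B ⊆ B'. -/
/-!
Fix for every `α` a club `C α` inside the free set `{β < κ : (α,0,β) ∉ B ∧ (α,1,β) ∉ B}`.
For each `α` already mentioned by `B`, add `(α, 0, β)` for every free `β` outside `C α`;
then the free set at `α` becomes exactly `C α`. Coordinates `α` not mentioned by `B` stay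
untouched, and their free set is all of `κ`, which is club since `κ` is a limit ordinal.
Only `|B| ≤ κ` many coordinates are touched, each by at most `κ` new triples, so the
extension still has size `≤ κ`.
-/

open Cardinal Set

def freeSet (B : Set (Ordinal.{0} × Bool × Ordinal.{0})) (α o : Ordinal.{0}) :
    Set Ordinal.{0} :=
  {β | β < o ∧ (α, false, β) ∉ B ∧ (α, true, β) ∉ B}

theorem isClubIn_Iio_of_isSuccLimit {o : Ordinal.{0}} (ho : Order.IsSuccLimit o) :
    IsClubIn (Iio o) o :=
  ⟨subset_rfl, fun η hη => ⟨Order.succ η, ho.succ_lt hη, Order.lt_succ η⟩,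
    fun _ _ _ h => h⟩

theorem freeSet_eq_Iio_of_notMem_fst_image {B : Set (Ordinal.{0} × Bool × Ordinal.{0})}
    {α : Ordinal.{0}} (hα : α ∉ Prod.fst '' B) (o : Ordinal.{0}) :
    freeSet B α o = Iio o := by
  ext β
  exact ⟨fun h => h.1, fun h => ⟨h, fun hB => hα ⟨_, hB, rfl⟩, fun hB => hα ⟨_, hB, rfl⟩⟩⟩

def extendOutside (B : Set (Ordinal.{0} × Bool × Ordinal.{0})) (C : Ordinal.{0} → Set Ordinal.{0})
    (o : Ordinal.{0}) : Set (Ordinal.{0} × Bool × Ordinal.{0}) :=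
  B ∪ {p | p.1 ∈ Prod.fst '' B ∧ p.2.1 = false ∧ p.2.2 ∈ freeSet B p.1 o \ C p.1}

section extendOutside

variable {B : Set (Ordinal.{0} × Bool × Ordinal.{0})} {C : Ordinal.{0} → Set Ordinal.{0}}
  {o : Ordinal.{0}}

theorem fst_image_extendOutside : Prod.fst '' extendOutside B C o = Prod.fst '' B := by
  refine Subset.antisymm ?_ (image_mono subset_union_left)
  rintro _ ⟨p, hp | hp, rfl⟩
  · exact ⟨p, hp, rfl⟩
  · exact hp.1

theorem extendOutside_subset_of_subset {l : Ordinal.{0}}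
    (hB : B ⊆ {p | p.1 < l ∧ p.2.2 < o}) :
    extendOutside B C o ⊆ {p | p.1 < l ∧ p.2.2 < o} := by
  rintro p (hp | ⟨⟨q, hq, hqp⟩, -, hpo, -⟩)
  · exact hB hp
  · exact ⟨hqp ▸ (hB hq).1, hpo.1⟩

theorem extendOutside_subset_image2 :
    extendOutside B C o ⊆
      B ∪ image2 (fun α β => (α, false, β)) (Prod.fst '' B) (Iio o) := by
  rintro ⟨α, b, β⟩ (hp | ⟨hα, hb, hβ, -⟩)
  · exact Or.inl hp
  · exact Or.inr ⟨α, hα, β, hβ.1, by simp_all⟩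

theorem mk_extendOutside_le {κ : Cardinal.{0}} (hκ : ℵ₀ ≤ κ) (hB : #B ≤ lift.{1} κ) :
    #(extendOutside B C κ.ord) ≤ lift.{1} κ := by
  have hκ' : ℵ₀ ≤ lift.{1} κ := by simpa using hκ
  calc #(extendOutside B C κ.ord)
      ≤ #B + #(Prod.fst '' B) * #(Iio κ.ord) :=
        (mk_le_mk_of_subset extendOutside_subset_image2).trans
          ((mk_union_le _ _).trans (add_le_add le_rfl mk_image2_le))
    _ ≤ lift.{1} κ + lift.{1} κ * lift.{1} κ := by
        rw [mk_Iio_ordinal, card_ord]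
        gcongr
        exact mk_image_le.trans hB
    _ = lift.{1} κ := by rw [mul_eq_self hκ', add_eq_self hκ']

theorem extendOutside_consistent (hB : ∀ α β, ¬((α, false, β) ∈ B ∧ (α, true, β) ∈ B))
    (α β : Ordinal.{0}) :
    ¬((α, false, β) ∈ extendOutside B C o ∧ (α, true, β) ∈ extendOutside B C o) := by
  rintro ⟨hfalse, htrue | ⟨-, htrue, -⟩⟩
  · rcases hfalse with hfalse | ⟨-, -, ⟨-, -, hnot⟩, -⟩
    exacts [hB α β ⟨hfalse, htrue⟩, hnot htrue]
  · exact Bool.noConfusion htrue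

theorem freeSet_extendOutside_of_mem_fst_image {α : Ordinal.{0}} (hα : α ∈ Prod.fst '' B) :
    freeSet (extendOutside B C o) α o = freeSet B α o ∩ C α := by
  ext β
  simp only [freeSet, extendOutside, mem_inter_iff, mem_sdiff, mem_union, mem_ofPred_eq]
  grind

theorem freeSet_extendOutside_of_notMem_fst_image {α : Ordinal.{0}} (hα : α ∉ Prod.fst '' B) :
    freeSet (extendOutside B C o) α o = Iio o :=
  freeSet_eq_Iio_of_notMem_fst_image (by rwa [fst_image_extendOutside]) o

end extendOutside

theorem exists_rSet_superset_general (κ lam : Cardinal.{0}) (hreg : κ.IsRegular)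
    (B : Set (Ordinal.{0} × Bool × Ordinal.{0}))
    (hsub : B ⊆ {p | p.1 < lam.ord ∧ p.2.2 < κ.ord})
    (hcard : Cardinal.mk ↥B ≤ Cardinal.lift.{1} κ)
    (hfun : ∀ α β, ¬((α, false, β) ∈ B ∧ (α, true, β) ∈ B))
    (hclub : ∀ α < lam.ord, ∃ C, IsClubIn C κ.ord ∧
        C ⊆ {β | β < κ.ord ∧ (α, false, β) ∉ B ∧ (α, true, β) ∉ B}) :
    ∃ B' ∈ RSet κ lam, B ⊆ B' := by
  choose! C hC using hclub
  refine ⟨extendOutside B C κ.ord, ⟨extendOutside_subset_of_subset hsub,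
    mk_extendOutside_le hreg.aleph0_le hcard, extendOutside_consistent hfun,
    fun α hα => ?_⟩, subset_union_left⟩
  change IsClubIn (freeSet _ α κ.ord) κ.ord
  by_cases hαB : α ∈ Prod.fst '' B
  · obtain ⟨hCclub, hCfree : C α ⊆ freeSet B α κ.ord⟩ := hC α hα
    rwa [freeSet_extendOutside_of_mem_fst_image hαB, inter_eq_right.mpr hCfree]
  · rw [freeSet_extendOutside_of_notMem_fst_image hαB]
    exact isClubIn_Iio_of_isSuccLimit (isSuccLimit_ord hreg.aleph0_le)

/-- If `B ⊆ λ × 2 × κ` has size `≤ κ`, never contains both `(α,0,β)` and `(α,1,β)`,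
and for each `α < λ` the set `{β < κ : (α,0,β) ∉ B ∧ (α,1,β) ∉ B}` merely *contains*
a club subset of `κ`, then `B` extends to some `B' ∈ R(κ,λ)`. -/
theorem exists_rSet_superset (κ lam : Cardinal.{0}) (hreg : κ.IsRegular) (hunc : ℵ₀ < κ)
    (B : Set (Ordinal.{0} × Bool × Ordinal.{0}))
    (hsub : B ⊆ {p | p.1 < lam.ord ∧ p.2.2 < κ.ord})
    (hcard : Cardinal.mk ↥B ≤ Cardinal.lift.{1} κ)
    (hfun : ∀ α β, ¬((α, false, β) ∈ B ∧ (α, true, β) ∈ B))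
    (hclub : ∀ α < lam.ord, ∃ C, IsClubIn C κ.ord ∧
        C ⊆ {β | β < κ.ord ∧ (α, false, β) ∉ B ∧ (α, true, β) ∉ B}) :
    ∃ B' ∈ RSet κ lam, B ⊆ B' :=
  exists_rSet_superset_general κ lam hreg B hsub hcard hfun hclub
end

section
/- Let λ be a cardinal. Let (B_n)_{n<ω} be a sequence of elements of R(ℵ₀,λ) increasing with respect to inclusion, let B_ω = ⋃_{n<ω} B_n, let f be a bijection from ω onto the domain of B_ω, and let g be an injective function from {(γ,n) : γ < n < ω} into ω such that for all γ < n < ω, all i < 2 and all m < ω, (f(γ), i, g(γ,n)) ∉ B_m. Then there exists B' ∈ R(ℵ₀,λ) with B_ω ⊆ B'. -/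
/-!
The union `B_ω` itself lies in `R(ℵ₀,λ)`. Countability and the disjointness condition pass to
the union of an increasing chain. For the infinitude condition at `α`, either `α` is outside the
domain of `B_ω`, so every `β` is free, or `α = f γ`, and then the pairwise distinct values
`g (γ, n)` for `n > γ` are free coordinates of `α`.
-/

open Cardinal Set

/-- Baumgartner's partial order `R(ℵ₀,λ)`: subsets `B` of `λ × 2 × ω`
(here `2` is rendered as `Bool`, with `false` for `0` and `true` for `1`, and the third
coordinate ranges over `ℕ`) such that `B` is countable, never both `(α,0,β) ∈ B` and
`(α,1,β) ∈ B`, and for each `α < λ` the set `{β < ω : (α,0,β) ∉ B ∧ (α,1,β) ∉ B}`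
is infinite. -/
def R0Set (lam : Cardinal.{0}) : Set (Set (Ordinal.{0} × Bool × ℕ)) :=
  {B | B ⊆ {p | p.1 < lam.ord} ∧
       B.Countable ∧
       (∀ α β, ¬((α, false, β) ∈ B ∧ (α, true, β) ∈ B)) ∧
       ∀ α < lam.ord, {β : ℕ | (α, false, β) ∉ B ∧ (α, true, β) ∉ B}.Infinite}

theorem Directed.not_mem_iUnion_and_mem_iUnion {ι X : Type*} {s : ι → Set X}
    (hs : Directed (· ⊆ ·) s) {a b : X} (hab : ∀ i, ¬(a ∈ s i ∧ b ∈ s i)) :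
    ¬(a ∈ ⋃ i, s i ∧ b ∈ ⋃ i, s i) := by
  rintro ⟨ha, hb⟩
  obtain ⟨i, hai⟩ := mem_iUnion.1 ha
  obtain ⟨j, hbj⟩ := mem_iUnion.1 hb
  obtain ⟨k, hik, hjk⟩ := hs i j
  exact hab k ⟨hik hai, hjk hbj⟩

section FreeCoords

variable {X : Type*}

def freeCoords (C : Set (X × Bool × ℕ)) (x : X) : Set ℕ :=
  {β | (x, false, β) ∉ C ∧ (x, true, β) ∉ C}

theorem freeCoords_eq_univ {C : Set (X × Bool × ℕ)} {x : X} (hx : ∀ i β, (x, i, β) ∉ C) :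
    freeCoords C x = Set.univ :=
  eq_univ_of_forall fun β => ⟨hx false β, hx true β⟩

theorem infinite_freeCoords_of_injOn {C : Set (X × Bool × ℕ)} {x : X} {s : Set ℕ} {h : ℕ → ℕ}
    (hs : s.Infinite) (hinj : InjOn h s) (hfree : ∀ n ∈ s, ∀ i, (x, i, h n) ∉ C) :
    (freeCoords C x).Infinite :=
  (hs.image hinj).mono <| by
    rintro _ ⟨n, hn, rfl⟩
    exact ⟨hfree n hn false, hfree n hn true⟩

end FreeCoords

/-- The key step of Baumgartner's Lemma 6.10 for `κ = ℵ₀`: if `(B_n)_{n<ω}` is an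
increasing chain in `R(ℵ₀,λ)`, `f` is a bijection from `ω` onto the domain of
`B_ω = ⋃_{n<ω} B_n`, and `g` is injective on `{(γ,n) : γ < n < ω}` with
`(f γ, i, g (γ,n)) ∉ B_m` for all `γ < n < ω`, `i < 2`, `m < ω`,
then `B_ω` extends to some `B' ∈ R(ℵ₀,λ)`. -/
theorem union_chain_extends_aleph0 (lam : Cardinal.{0})
    (B : ℕ → Set (Ordinal.{0} × Bool × ℕ))
    (hB : ∀ n, B n ∈ R0Set lam)
    (hmono : ∀ m n, m < n → B m ⊆ B n)
    (f : ℕ → Ordinal.{0})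
    (hf : Set.BijOn f Set.univ {α | ∃ i β, (α, i, β) ∈ ⋃ n, B n})
    (g : ℕ × ℕ → ℕ)
    (hg : Set.InjOn g {p | p.1 < p.2})
    (havoid : ∀ γ n, γ < n → ∀ i : Bool, ∀ m, (f γ, i, g (γ, n)) ∉ B m) :
    ∃ B' ∈ R0Set lam, (⋃ n, B n) ⊆ B' := by
  have hB_mono : Monotone B := monotone_nat_of_le_succ fun n => hmono n (n + 1) n.lt_succ_self
  refine ⟨⋃ n, B n, ⟨iUnion_subset fun n => (hB n).1, countable_iUnion fun n => (hB n).2.1,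
    fun α β => hB_mono.directed_le.not_mem_iUnion_and_mem_iUnion fun n => (hB n).2.2.1 α β,
    fun α _ => ?_⟩, subset_rfl⟩
  show (freeCoords (⋃ n, B n) α).Infinite
  by_cases hdom : ∃ i β, (α, i, β) ∈ ⋃ n, B n
  · obtain ⟨γ, -, rfl⟩ := hf.surjOn hdom
    have hinj : InjOn (fun n => g (γ, n)) (Ioi γ) :=
      hg.comp (Prod.mk_right_injective γ).injOn fun _ hn => hn
    refine infinite_freeCoords_of_injOn (Ioi_infinite γ) hinj fun n hn i => ?_
    simpa only [mem_iUnion, not_exists] using havoid γ n hn i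
  · rw [freeCoords_eq_univ fun i β h => hdom ⟨i, β, h⟩]
    exact Set.infinite_univ
end

section
/- Let κ be a regular uncountable cardinal and λ a cardinal. If B ∈ R(κ,λ), E ⊆ λ, and F ⊆ κ is a closed subset of κ with |F| < κ, then B \ (E × 2 × F) ∈ R(κ,λ). -/
/-!
For `α ∉ E` nothing changes at `α`. For `α ∈ E` the set of `β < κ` left free at `α` grows from
the club `C` of `B` to `C ∪ (F ∩ κ)`. A superset of an unbounded set is unbounded, and a union of
two sets closed under bounded suprema is again closed: the supremum of a nonempty bounded
`X ⊆ s ∪ t` is the larger of the suprema of `X ∩ s` and `X ∩ t`.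
-/

open Cardinal Set

def IsSupClosedIn {α : Type*} [ConditionallyCompleteLinearOrder α] (C : Set α) (o : α) : Prop :=
  ∀ X ⊆ C, X.Nonempty → sSup X < o → sSup X ∈ C

section SupClosed

variable {α : Type*} [ConditionallyCompleteLinearOrder α] {s t : Set α} {o : α}

theorem IsSupClosedIn.union (hs : IsSupClosedIn s o) (ht : IsSupClosedIn t o)
    (hbdd : BddAbove (s ∪ t)) : IsSupClosedIn (s ∪ t) o := by
  intro X hX hne hlt
  rcases (X ∩ s).eq_empty_or_nonempty with hXs | hXs
  · have hXt_sub : X ⊆ t := fun x hx => (hX hx).resolve_left fun h => hXs.subset ⟨hx, h⟩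
    exact Or.inr (ht X hXt_sub hne hlt)
  rcases (X ∩ t).eq_empty_or_nonempty with hXt | hXt
  · have hXs_sub : X ⊆ s := fun x hx => (hX hx).resolve_right fun h => hXt.subset ⟨hx, h⟩
    exact Or.inl (hs X hXs_sub hne hlt)
  have hXbdd : BddAbove X := hbdd.mono hX
  have hsplit : X = X ∩ s ∪ X ∩ t := by rw [← inter_union_distrib_left, inter_eq_left.2 hX]
  have hsup : sSup X = sSup (X ∩ s) ⊔ sSup (X ∩ t) := by
    conv_lhs => rw [hsplit]
    exact csSup_union (hXbdd.mono inter_subset_left) hXs (hXbdd.mono inter_subset_left) hXt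
  rcases max_choice (sSup (X ∩ s)) (sSup (X ∩ t)) with h | h
  · rw [← hsup] at h
    exact Or.inl (h ▸ hs _ inter_subset_right hXs (h ▸ hlt))
  · rw [← hsup] at h
    exact Or.inr (h ▸ ht _ inter_subset_right hXt (h ▸ hlt))

theorem IsSupClosedIn.inter_Iio (hs : IsSupClosedIn s o) : IsSupClosedIn (s ∩ Iio o) o :=
  fun X hX hne hlt => ⟨hs X (hX.trans inter_subset_left) hne hlt, hlt⟩

end SupClosed

theorem IsClubIn.union_inter_Iio {C F : Set Ordinal.{0}} {o : Ordinal.{0}} (hC : IsClubIn C o)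
    (hF : IsSupClosedIn F o) : IsClubIn (C ∪ F ∩ Iio o) o := by
  obtain ⟨hCo, hunb, hclosed⟩ := hC
  have hsub : C ∪ F ∩ Iio o ⊆ Iio o := union_subset hCo inter_subset_right
  exact ⟨hsub, fun η hη => (hunb η hη).imp fun γ hγ => ⟨Or.inl hγ.1, hγ.2⟩,
    IsSupClosedIn.union hclosed hF.inter_Iio ⟨o, fun _ h => le_of_lt (hsub h)⟩⟩

def freeAt (B : Set (Ordinal.{0} × Bool × Ordinal.{0})) (o α : Ordinal.{0}) : Set Ordinal.{0} :=
  {β | β < o ∧ (α, false, β) ∉ B ∧ (α, true, β) ∉ B}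

section FreeAt

variable (B : Set (Ordinal.{0} × Bool × Ordinal.{0})) {E F : Set Ordinal.{0}} {o α : Ordinal.{0}}

theorem freeAt_sdiff_of_mem (hα : α ∈ E) :
    freeAt (B \ {p | p.1 ∈ E ∧ p.2.2 ∈ F}) o α = freeAt B o α ∪ F ∩ Iio o := by
  ext β
  by_cases hβ : β ∈ F <;> simp +contextual [freeAt, hα, hβ]

theorem freeAt_sdiff_of_notMem (hα : α ∉ E) :
    freeAt (B \ {p | p.1 ∈ E ∧ p.2.2 ∈ F}) o α = freeAt B o α := by
  ext β
  simp [freeAt, hα]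

end FreeAt

theorem rSet_sdiff_mem_general (κ lam : Cardinal.{0})
    (B : Set (Ordinal.{0} × Bool × Ordinal.{0})) (hB : B ∈ RSet κ lam)
    (E : Set Ordinal.{0})
    (F : Set Ordinal.{0})
    (hFclosed : ∀ X ⊆ F, X.Nonempty → sSup X < κ.ord → sSup X ∈ F) :
    B \ {p | p.1 ∈ E ∧ p.2.2 ∈ F} ∈ RSet κ lam := by
  obtain ⟨hsub, hcard, hdisj, hclub⟩ := hB
  refine ⟨fun p hp => hsub hp.1, (mk_le_mk_of_subset sdiff_subset).trans hcard,
    fun α β h => hdisj α β ⟨h.1.1, h.2.1⟩, fun α hα => ?_⟩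
  change IsClubIn (freeAt _ κ.ord α) κ.ord
  by_cases hαE : α ∈ E
  · rw [freeAt_sdiff_of_mem B hαE]
    exact (hclub α hα).union_inter_Iio hFclosed
  · rw [freeAt_sdiff_of_notMem B hαE]
    exact hclub α hα

/-- For regular uncountable `κ`: removing `E × 2 × F` from a condition `B ∈ R(κ,λ)`,
where `E ⊆ λ` and `F ⊆ κ` is closed with `|F| < κ`, yields again an element of `R(κ,λ)`. -/
theorem rSet_sdiff_mem (κ lam : Cardinal.{0}) (hreg : κ.IsRegular) (hunc : ℵ₀ < κ)
    (B : Set (Ordinal.{0} × Bool × Ordinal.{0})) (hB : B ∈ RSet κ lam)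
    (E : Set Ordinal.{0}) (hE : E ⊆ Set.Iio lam.ord)
    (F : Set Ordinal.{0}) (hF : F ⊆ Set.Iio κ.ord)
    (hFclosed : ∀ X ⊆ F, X.Nonempty → sSup X < κ.ord → sSup X ∈ F)
    (hFcard : Cardinal.mk ↥F < Cardinal.lift.{1} κ) :
    B \ {p | p.1 ∈ E ∧ p.2.2 ∈ F} ∈ RSet κ lam :=
  rSet_sdiff_mem_general κ lam B hB E F hFclosed
end
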